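/- Let β := 2 - ζ₉⁴ - ζ₉⁵ ∈ Q(ζ₉)⁺ and u₁ = ζ₉ - ζ₉² - ζ₉⁵, u₂ = 1 - ζ₉⁴ - ζ₉⁵. Then β³ = 3u₁²u₂². -/

import Mathlib

/-!
`β = (1 - ζ₉⁴)(1 - ζ₉⁻⁴)` generates the prime above `3`, which is totally ramified in
`ℚ(ζ₉)⁺`, so `β³` is `3` times a unit. The explicit identity holds already modulo the
cyclotomic polynomial `Φ₉ = X⁶ + X³ + 1`, of which `ζ₉` is a root.
-/

noncomputable section

/-- `ζ₉ = exp(2πi/9)`. -/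
def z9 : ℂ := Complex.exp (2 * Real.pi * Complex.I / 9)

def u1 : ℂ := z9 - z9 ^ 2 - z9 ^ 5

def u2 : ℂ := 1 - z9 ^ 4 - z9 ^ 5

/-- `β = 2 - ζ₉⁴ - ζ₉⁵`. -/
def beta : ℂ := 2 - z9 ^ 4 - z9 ^ 5

theorem IsPrimitiveRoot.pow_six_add_pow_three_add_one_eq_zero {R : Type*} [CommRing R]
    [IsDomain R] {ζ : R} (hζ : IsPrimitiveRoot ζ 9) : ζ ^ 6 + ζ ^ 3 + 1 = 0 := by
  have hcube : IsPrimitiveRoot (ζ ^ 3) 3 := hζ.pow_of_dvd (by norm_num) (by norm_num)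
  have hsum := hcube.geom_sum_eq_zero (by norm_num)
  simp only [Finset.sum_range_succ, Finset.sum_range_zero] at hsum
  linear_combination hsum

theorem cube_eq_of_pow_six_add_pow_three_add_one_eq_zero {R : Type*} [CommRing R] {ζ : R}
    (hζ : ζ ^ 6 + ζ ^ 3 + 1 = 0) :
    (2 - ζ ^ 4 - ζ ^ 5) ^ 3 = 3 * (ζ - ζ ^ 2 - ζ ^ 5) ^ 2 * (1 - ζ ^ 4 - ζ ^ 5) ^ 2 := by
  linear_combination (8 - 3 * ζ ^ 2 - 2 * ζ ^ 3 - 15 * ζ ^ 4 - 9 * ζ ^ 5 + 6 * ζ ^ 6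
    + 3 * ζ ^ 7 + 12 * ζ ^ 8 + 14 * ζ ^ 9 - 3 * ζ ^ 11 - 3 * ζ ^ 12 - 6 * ζ ^ 13
    - 3 * ζ ^ 14) * hζ

theorem z9_isPrimitiveRoot : IsPrimitiveRoot z9 9 := by
  simpa [z9] using Complex.isPrimitiveRoot_exp 9 (by norm_num)

/-- `β³ = 3u₁²u₂²`. -/
theorem stmt6 : beta ^ 3 = 3 * u1 ^ 2 * u2 ^ 2 :=
  cube_eq_of_pow_six_add_pow_three_add_one_eq_zero
    z9_isPrimitiveRoot.pow_six_add_pow_three_add_one_eq_zero
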